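/- Let L be an orthomodular ortholattice and let a, b, c ∈ L. Then the following three conditions are equivalent: (i) (a ≡ b) ⊓ ((b ≡ c) ⊔ (a ≡ c)) ≤ (a ≡ c); (ii) (a ≡ b)ᶜ ⊔ ((a ≡ c) ≡ (b ≡ c)) = ⊤; (iii) (a ≡ b) ⊓ ((b ≡ c) ⊔ (a ≡ c)) = ((a ≡ b) ⊓ (b ≡ c)) ⊔ ((a ≡ b) ⊓ (a ≡ c)). -/

import Mathlib

/-- An ortholattice: a bounded lattice with an orthocomplementation. -/
class Ortholattice (α : Type*) extends Lattice α, BoundedOrder α, Compl α where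
  compl_compl : ∀ x : α, xᶜᶜ = x
  compl_antitone : ∀ x y : α, x ≤ y → yᶜ ≤ xᶜ
  inf_compl : ∀ x : α, x ⊓ xᶜ = ⊥
  sup_compl : ∀ x : α, x ⊔ xᶜ = ⊤

/-- The identity operation `a ≡ b = (a ⊓ b) ⊔ (aᶜ ⊓ bᶜ)`. -/
def olEquiv {α : Type*} [Ortholattice α] (a b : α) : α := (a ⊓ b) ⊔ (aᶜ ⊓ bᶜ)

/-!
In an orthomodular lattice `x ≡ y` commutes with `x` and `y`, and meets `y` in `x ⊓ y` and
`yᶜ` in `xᶜ ⊓ yᶜ` (Foulis–Holland). Splitting `(a ≡ b) ⊓ (b ≡ c)` along `b`, which it commutes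
with, gives transitivity `(a ≡ b) ⊓ (b ≡ c) ≤ a ≡ c`, and likewise with the three letters
permuted. Writing `e, f, g` for `a ≡ b, b ≡ c, a ≡ c`, each condition is then equivalent to
`e ⊓ (f ⊔ g) = f ⊓ g`: for (ii) because `f ⊓ g ≤ e ⊓ (f ⊔ g)` and, by orthomodularity, two
comparable elements are equal as soon as the larger one meets the complement of the smaller in `⊥`.
-/

section

variable {α : Type*} [Lattice α]

theorem inf_sup_le_right_iff_eq_sup_inf {e f g : α} (hefg : e ⊓ f ≤ g) :
    e ⊓ (f ⊔ g) ≤ g ↔ e ⊓ (f ⊔ g) = e ⊓ f ⊔ e ⊓ g :=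
  ⟨fun h => le_antisymm ((le_inf inf_le_left h).trans le_sup_right)
      (sup_le (inf_le_inf_left e le_sup_left) (inf_le_inf_left e le_sup_right)),
    fun h => h ▸ sup_le hefg inf_le_right⟩

theorem inf_sup_le_right_iff_eq_inf {e f g : α} (hegf : e ⊓ g ≤ f) (hfge : f ⊓ g ≤ e) :
    e ⊓ (f ⊔ g) ≤ g ↔ e ⊓ (f ⊔ g) = f ⊓ g :=
  ⟨fun h => le_antisymm (le_inf ((le_inf inf_le_left h).trans hegf) h)
      (le_inf hfge (inf_le_left.trans le_sup_left)),
    fun h => h ▸ inf_le_right⟩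

end

namespace Ortholattice

variable {α : Type*} [Ortholattice α]

theorem compl_le_compl {x y : α} (h : x ≤ y) : yᶜ ≤ xᶜ :=
  compl_antitone x y h

theorem compl_inf_self (x : α) : xᶜ ⊓ x = ⊥ := by
  rw [inf_comm, Ortholattice.inf_compl]

theorem compl_injective : Function.Injective (fun x : α => xᶜ) := fun x y h => by
  simpa only [Ortholattice.compl_compl] using congrArg (·ᶜ) h

theorem le_compl_comm {x y : α} : x ≤ yᶜ ↔ y ≤ xᶜ :=
  ⟨fun h => Ortholattice.compl_compl y ▸ compl_le_compl h,
   fun h => Ortholattice.compl_compl x ▸ compl_le_compl h⟩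

theorem compl_sup (x y : α) : (x ⊔ y)ᶜ = xᶜ ⊓ yᶜ :=
  le_antisymm (le_inf (compl_le_compl le_sup_left) (compl_le_compl le_sup_right))
    (le_compl_comm.mp (sup_le (le_compl_comm.mp inf_le_left) (le_compl_comm.mp inf_le_right)))

theorem compl_inf (x y : α) : (x ⊓ y)ᶜ = xᶜ ⊔ yᶜ :=
  compl_injective (by simp only [compl_sup, Ortholattice.compl_compl])

theorem compl_top : (⊤ : α)ᶜ = ⊥ := by
  simpa only [top_inf_eq] using Ortholattice.inf_compl (⊤ : α)

theorem compl_sup_eq_top_iff {x y : α} : xᶜ ⊔ y = ⊤ ↔ x ⊓ yᶜ = ⊥ := by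
  rw [← compl_injective.eq_iff, compl_sup, compl_top, Ortholattice.compl_compl]

theorem olEquiv_comm (x y : α) : olEquiv x y = olEquiv y x := by
  rw [olEquiv, olEquiv, inf_comm x, inf_comm xᶜ]

theorem compl_olEquiv (x y : α) : (olEquiv x y)ᶜ = (x ⊓ y)ᶜ ⊓ (x ⊔ y) := by
  rw [olEquiv, compl_sup, compl_inf xᶜ, Ortholattice.compl_compl, Ortholattice.compl_compl]

variable (α) in
def IsOrthomodular : Prop :=
  ∀ a b : α, a ≤ b → a ⊔ (aᶜ ⊓ b) = b

theorem IsOrthomodular.compl_inf_eq_bot_iff (hOM : IsOrthomodular α) {x y : α}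
    (hxy : x ≤ y) : xᶜ ⊓ y = ⊥ ↔ x = y :=
  ⟨fun h => by simpa only [h, sup_bot_eq] using hOM x y hxy, fun h => h ▸ compl_inf_self x⟩

def Commutes (x y : α) : Prop :=
  x = (x ⊓ y) ⊔ (x ⊓ yᶜ)

theorem Commutes.of_le {x y : α} (h : x ≤ y) : Commutes x y := by
  rw [Commutes, inf_eq_left.mpr h, sup_eq_left.mpr inf_le_left]

theorem Commutes.of_le_compl {x y : α} (h : x ≤ yᶜ) : Commutes x y := by
  rw [Commutes, inf_eq_left.mpr h, sup_eq_right.mpr inf_le_left]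

theorem Commutes.compl_right {x y : α} (h : Commutes x y) : Commutes x yᶜ := by
  rwa [Commutes, Ortholattice.compl_compl, sup_comm]

theorem Commutes.symm (hOM : IsOrthomodular α) {x y : α} (h : Commutes x y) :
    Commutes y x := by
  have hxc : xᶜ = (x ⊓ y)ᶜ ⊓ (xᶜ ⊔ y) := by
    conv_lhs => rw [h]
    rw [compl_sup, compl_inf x yᶜ, Ortholattice.compl_compl]
  have hy : y ⊓ xᶜ = (x ⊓ y)ᶜ ⊓ y := by
    rw [hxc, inf_comm, inf_assoc, inf_eq_right.mpr (le_sup_right : y ≤ xᶜ ⊔ y)]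
  rw [Commutes, hy, inf_comm y x]
  exact (hOM _ _ inf_le_right).symm

theorem Commutes.compl_left (hOM : IsOrthomodular α) {x y : α} (h : Commutes x y) :
    Commutes xᶜ y :=
  ((h.symm hOM).compl_right).symm hOM

/-- A special case of the Foulis–Holland theorem. -/
theorem IsOrthomodular.sup_inf_of_commutes (hOM : IsOrthomodular α) {x y b : α}
    (hx : Commutes x b) (hy : Commutes y b) : (x ⊔ y) ⊓ b = (x ⊓ b) ⊔ (y ⊓ b) := by
  set t := (x ⊓ b) ⊔ (y ⊓ b)
  have hxy : x ⊔ y ≤ t ⊔ bᶜ := by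
    rw [hx, hy]
    exact sup_le (sup_le_sup le_sup_left inf_le_right) (sup_le_sup le_sup_right inf_le_right)
  have ht : t ≤ (x ⊔ y) ⊓ b :=
    sup_le (inf_le_inf_right b le_sup_left) (inf_le_inf_right b le_sup_right)
  refine ((hOM.compl_inf_eq_bot_iff ht).mp (le_bot_iff.mp ?_)).symm
  -- `t ⊔ bᶜ` is the complement of `tᶜ ⊓ b`
  calc tᶜ ⊓ ((x ⊔ y) ⊓ b) ≤ (tᶜ ⊓ b) ⊓ (tᶜ ⊓ b)ᶜ := by
        rw [compl_inf, Ortholattice.compl_compl]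
        exact le_inf (inf_le_inf_left _ inf_le_right) (inf_le_of_right_le (inf_le_of_left_le hxy))
    _ = ⊥ := Ortholattice.inf_compl _

theorem Commutes.sup (hOM : IsOrthomodular α) {x y b : α} (hx : Commutes x b)
    (hy : Commutes y b) : Commutes (x ⊔ y) b := by
  rw [Commutes, hOM.sup_inf_of_commutes hx hy,
    hOM.sup_inf_of_commutes hx.compl_right hy.compl_right]
  conv_lhs => rw [hx, hy]
  ac_rfl

theorem Commutes.inf (hOM : IsOrthomodular α) {x y b : α} (hx : Commutes x b)
    (hy : Commutes y b) : Commutes (x ⊓ y) b := by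
  simpa only [compl_sup, Ortholattice.compl_compl] using
    ((hx.compl_left hOM).sup hOM (hy.compl_left hOM)).compl_left hOM

theorem commutes_olEquiv_right (hOM : IsOrthomodular α) (x y : α) : Commutes (olEquiv x y) y :=
  (Commutes.of_le inf_le_right).sup hOM (Commutes.of_le_compl inf_le_right)

theorem olEquiv_inf_right (hOM : IsOrthomodular α) (x y : α) : olEquiv x y ⊓ y = x ⊓ y := by
  rw [olEquiv, hOM.sup_inf_of_commutes (Commutes.of_le inf_le_right)
      (Commutes.of_le_compl inf_le_right),
    inf_eq_left.mpr inf_le_right, inf_assoc, compl_inf_self, inf_bot_eq, sup_bot_eq]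

theorem olEquiv_inf_compl_right (hOM : IsOrthomodular α) (x y : α) :
    olEquiv x y ⊓ yᶜ = xᶜ ⊓ yᶜ := by
  rw [olEquiv, hOM.sup_inf_of_commutes (Commutes.of_le inf_le_right).compl_right
      (Commutes.of_le inf_le_right),
    inf_eq_left.mpr (inf_le_right : xᶜ ⊓ yᶜ ≤ yᶜ), inf_assoc, Ortholattice.inf_compl,
    inf_bot_eq, bot_sup_eq]

theorem olEquiv_inf_olEquiv_le (hOM : IsOrthomodular α) (a b c : α) :
    olEquiv a b ⊓ olEquiv b c ≤ olEquiv a c := by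
  have hcomm : Commutes (olEquiv a b ⊓ olEquiv b c) b :=
    (commutes_olEquiv_right hOM a b).inf hOM (olEquiv_comm c b ▸ commutes_olEquiv_right hOM c b)
  have hb : olEquiv a b ⊓ olEquiv b c ⊓ b ≤ a ⊓ c := by
    calc olEquiv a b ⊓ olEquiv b c ⊓ b = (olEquiv a b ⊓ b) ⊓ (olEquiv c b ⊓ b) := by
          rw [inf_inf_distrib_right, olEquiv_comm b c]
      _ = (a ⊓ b) ⊓ (c ⊓ b) := by rw [olEquiv_inf_right hOM, olEquiv_inf_right hOM]
      _ ≤ a ⊓ c := inf_le_inf inf_le_left inf_le_left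
  have hbc : olEquiv a b ⊓ olEquiv b c ⊓ bᶜ ≤ aᶜ ⊓ cᶜ := by
    calc olEquiv a b ⊓ olEquiv b c ⊓ bᶜ = (olEquiv a b ⊓ bᶜ) ⊓ (olEquiv c b ⊓ bᶜ) := by
          rw [inf_inf_distrib_right, olEquiv_comm b c]
      _ = (aᶜ ⊓ bᶜ) ⊓ (cᶜ ⊓ bᶜ) := by
          rw [olEquiv_inf_compl_right hOM, olEquiv_inf_compl_right hOM]
      _ ≤ aᶜ ⊓ cᶜ := inf_le_inf inf_le_left inf_le_left
  rw [hcomm]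
  exact sup_le_sup hb hbc

theorem IsOrthomodular.compl_sup_olEquiv_eq_top_iff (hOM : IsOrthomodular α) {e f g : α}
    (hfge : f ⊓ g ≤ e) : eᶜ ⊔ olEquiv g f = ⊤ ↔ e ⊓ (f ⊔ g) = f ⊓ g := by
  have hle : f ⊓ g ≤ e ⊓ (f ⊔ g) := le_inf hfge (inf_le_left.trans le_sup_left)
  rw [compl_sup_eq_top_iff, compl_olEquiv, inf_comm g, sup_comm g, eq_comm (b := f ⊓ g),
    ← hOM.compl_inf_eq_bot_iff hle, inf_left_comm]

end Ortholattice

open Ortholattice in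
/-- In an orthomodular ortholattice the three displayed conditions are equivalent. -/
theorem stmt_2 (α : Type*) [Ortholattice α]
    (hOM : ∀ a b : α, a ≤ b → a ⊔ (aᶜ ⊓ b) = b) (a b c : α) :
    List.TFAE
      [ olEquiv a b ⊓ (olEquiv b c ⊔ olEquiv a c) ≤ olEquiv a c,
        (olEquiv a b)ᶜ ⊔ olEquiv (olEquiv a c) (olEquiv b c) = ⊤,
        olEquiv a b ⊓ (olEquiv b c ⊔ olEquiv a c) =
          (olEquiv a b ⊓ olEquiv b c) ⊔ (olEquiv a b ⊓ olEquiv a c) ] := by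
  have hOM : IsOrthomodular α := hOM
  have hefg := olEquiv_inf_olEquiv_le hOM a b c
  have hegf : olEquiv a b ⊓ olEquiv a c ≤ olEquiv b c := by
    simpa only [olEquiv_comm b a] using olEquiv_inf_olEquiv_le hOM b a c
  have hfge : olEquiv b c ⊓ olEquiv a c ≤ olEquiv a b := by
    simpa only [olEquiv_comm b a, olEquiv_comm c a] using olEquiv_inf_olEquiv_le hOM b c a
  tfae_have 1 ↔ 3 := inf_sup_le_right_iff_eq_sup_inf hefg
  tfae_have 1 ↔ 2 :=
    (inf_sup_le_right_iff_eq_inf hegf hfge).trans (hOM.compl_sup_olEquiv_eq_top_iff hfge).symm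
  tfae_finish
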